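/- arXiv:1712.00704 — 2 statements merged into one kernel-verified Lean document; each statement's English description precedes it below -/
import Mathlib

section
/- Let A ∈ ℝ^{n1×n2×n3} and B ∈ ℝ^{n2×n1×n3}. Then tr(A * B) = tr(Ā^{(1)} B̄^{(1)}), where Ā^{(1)} and B̄^{(1)} are the first frontal slices of the discrete Fourier transforms of A and B along the third dimension. -/
open Matrix Complex

/-! Summing the frontal slices turns the circular convolution of the t-product into an ordinary
matrix product, because `k ↦ k - t` permutes `Fin n3`; and the first Fourier slice is exactly that
sum of slices. Trace is additive and commutes with the embedding `ℝ → ℂ`. -/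

def fSlice {n1 n2 n3 : ℕ} (A : Fin n1 → Fin n2 → Fin n3 → ℝ) (t : Fin n3) :
    Matrix (Fin n1) (Fin n2) ℝ :=
  fun i j => A i j t

/-- The t-product of third-order tensors: slice-wise circular convolution. -/
def tProd {n1 n2 n4 n3 : ℕ} (A : Fin n1 → Fin n2 → Fin n3 → ℝ)
    (B : Fin n2 → Fin n4 → Fin n3 → ℝ) : Fin n1 → Fin n4 → Fin n3 → ℝ :=
  fun i j k => ∑ t : Fin n3, (fSlice A (k - t) * fSlice B t) i j

/-- The k-th frontal slice of the Fourier transform along the third dimension. -/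
noncomputable def fourierSlice {n1 n2 n3 : ℕ} (A : Fin n1 → Fin n2 → Fin n3 → ℝ)
    (k : Fin n3) : Matrix (Fin n1) (Fin n2) ℂ :=
  fun i j => ∑ t : Fin n3,
    (A i j t : ℂ) * Complex.exp (-2 * Real.pi * Complex.I / n3) ^ ((t : ℕ) * (k : ℕ))

theorem fSlice_tProd {n1 n2 n4 n3 : ℕ} (A : Fin n1 → Fin n2 → Fin n3 → ℝ)
    (B : Fin n2 → Fin n4 → Fin n3 → ℝ) (k : Fin n3) :
    fSlice (tProd A B) k = ∑ t, fSlice A (k - t) * fSlice B t := by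
  ext i j
  simp only [fSlice, tProd, Matrix.sum_apply]

theorem sum_fSlice_tProd {n1 n2 n4 n3 : ℕ} [NeZero n3] (A : Fin n1 → Fin n2 → Fin n3 → ℝ)
    (B : Fin n2 → Fin n4 → Fin n3 → ℝ) :
    ∑ k, fSlice (tProd A B) k = (∑ t, fSlice A t) * ∑ t, fSlice B t := by
  simp_rw [fSlice_tProd]
  rw [Finset.sum_comm, Matrix.mul_sum]
  refine Finset.sum_congr rfl fun t _ => ?_
  rw [← Matrix.sum_mul]
  exact congrArg (· * fSlice B t) ((Equiv.subRight t).sum_comp (fSlice A))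

theorem fourierSlice_zero {n1 n2 n3 : ℕ} (X : Fin n1 → Fin n2 → Fin n3 → ℝ) (h : 0 < n3) :
    fourierSlice X ⟨0, h⟩ = (∑ t, fSlice X t).map ofRealHom := by
  ext i j
  simp [fourierSlice, fSlice, Matrix.sum_apply]

/-- tr(A * B) = tr(Ā⁽¹⁾ B̄⁽¹⁾). -/
theorem trace_tProd_eq_trace_fourier_first_slices {n1 n2 n3 : ℕ} (hn3 : 0 < n3)
    (A : Fin n1 → Fin n2 → Fin n3 → ℝ) (B : Fin n2 → Fin n1 → Fin n3 → ℝ) :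
    ((∑ k : Fin n3, (fSlice (tProd A B) k).trace : ℝ) : ℂ)
      = (fourierSlice A ⟨0, hn3⟩ * fourierSlice B ⟨0, hn3⟩).trace := by
  have : NeZero n3 := NeZero.of_pos hn3
  rw [← Matrix.trace_sum, sum_fSlice_tProd, fourierSlice_zero, fourierSlice_zero,
    ← Matrix.map_mul, ← AddMonoidHom.map_trace]
  rfl
end

section
/- For any matrix X ∈ ℝ^{m×n} and any matrices A ∈ ℝ^{r×m}, B ∈ ℝ^{r×n} with A Aᵀ = I_r and B Bᵀ = I_r, one has tr(A X Bᵀ) ≤ Σ_{j=1}^r σ_j(X), the sum of the r largest singular values of X. -/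
/-!
With `P = A U` and `Q = B V`, which again have orthonormal rows, and `Σ = sigMat σ`, the trace is
`tr (Σ Qᵀ P) = ∑ₗ σₗ (Qᵀ P)ₗₗ ≤ ∑ₗ σₗ ((Qᵀ Q)ₗₗ + (Pᵀ P)ₗₗ) / 2` by AM-GM.
The diagonal of the orthogonal projection `Pᵀ P` consists of weights in `[0, 1]` of total
at most `r`, and against such weights the nonincreasing, nonnegative `σ` gains most by
putting weight `1` on its `r` largest entries.
-/

open Matrix

/-- The m×n rectangular diagonal matrix with diagonal entries σ. -/
def sigMat {m n : ℕ} (σ : Fin (min m n) → ℝ) : Matrix (Fin m) (Fin n) ℝ :=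
  fun i j => if h : (i : ℕ) = (j : ℕ) ∧ (i : ℕ) < min m n then σ ⟨i, h.2⟩ else 0

open Finset

theorem sum_mul_le_sum_of_threshold {ι : Type*} [Fintype ι] [DecidableEq ι] (S : Finset ι)
    {σ t : ι → ℝ} {s : ℝ} (hs : 0 ≤ s) (hσS : ∀ l ∈ S, s ≤ σ l) (hσSc : ∀ l ∉ S, σ l ≤ s)
    (ht0 : ∀ l, 0 ≤ t l) (ht1 : ∀ l, t l ≤ 1) (hts : ∑ l, t l ≤ #S) :
    ∑ l, σ l * t l ≤ ∑ l ∈ S, σ l := by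
  have key : ∀ l, σ l * t l ≤ s * t l + if l ∈ S then σ l - s else 0 := by
    intro l
    split_ifs with hl
    · nlinarith [hσS l hl, ht1 l]
    · nlinarith [hσSc l hl, ht0 l]
  calc ∑ l, σ l * t l ≤ ∑ l, (s * t l + if l ∈ S then σ l - s else 0) :=
        sum_le_sum fun l _ => key l
    _ = s * ∑ l, t l + (∑ l ∈ S, σ l - s * #S) := by
      rw [sum_add_distrib, ← mul_sum, sum_ite_mem, univ_inter, sum_sub_distrib, sum_const,
        nsmul_eq_mul]
      ring
    _ ≤ ∑ l ∈ S, σ l := by nlinarith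

theorem sum_mul_le_sum_castLE_of_antitone {N r : ℕ} (hr : r ≤ N) {σ t : Fin N → ℝ}
    (hσ0 : ∀ i, 0 ≤ σ i) (hσ : Antitone σ)
    (ht0 : ∀ l, 0 ≤ t l) (ht1 : ∀ l, t l ≤ 1) (hts : ∑ l, t l ≤ r) :
    ∑ l, σ l * t l ≤ ∑ i : Fin r, σ (Fin.castLE hr i) := by
  set S := univ.map (Fin.castLEEmb hr)
  have hS : ∀ l, l ∈ S ↔ (l : ℕ) < r := fun l =>
    ⟨fun hl => by obtain ⟨i, -, rfl⟩ := mem_map.mp hl; exact i.isLt,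
     fun hl => mem_map.mpr ⟨⟨l, hl⟩, mem_univ _, rfl⟩⟩
  obtain ⟨s, hs, hσS, hσSc⟩ : ∃ s, 0 ≤ s ∧ (∀ l ∈ S, s ≤ σ l) ∧ (∀ l ∉ S, σ l ≤ s) := by
    by_cases hrN : r < N
    · refine ⟨σ ⟨r, hrN⟩, hσ0 _, fun l hl => hσ ?_, fun l hl => hσ ?_⟩
      · exact Fin.le_def.mpr ((hS l).mp hl).le
      · exact Fin.le_def.mpr (not_lt.mp (mt (hS l).mpr hl))
    · exact ⟨0, le_rfl, fun l _ => hσ0 l,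
        fun l hl => absurd ((hS l).mpr (by omega)) hl⟩
  have hcard : #S = r := by simp [S]
  calc ∑ l, σ l * t l ≤ ∑ l ∈ S, σ l :=
        sum_mul_le_sum_of_threshold S hs hσS hσSc ht0 ht1 (hcard ▸ hts)
    _ = ∑ i : Fin r, σ (Fin.castLE hr i) := sum_map _ _ _

namespace Matrix

variable {ι κ μ : Type*}

theorem transpose_mul_apply_le_diag [Fintype ι] (P : Matrix ι κ ℝ) (Q : Matrix ι μ ℝ)
    (j : μ) (k : κ) :
    (Qᵀ * P) j k ≤ ((Qᵀ * Q) j j + (Pᵀ * P) k k) / 2 := by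
  simp only [mul_apply, transpose_apply, ← sum_add_distrib, sum_div]
  exact sum_le_sum fun i _ => by nlinarith [sq_nonneg (Q i j - P i k)]

theorem diag_transpose_mul_self_nonneg [Fintype ι] (P : Matrix ι κ ℝ) (k : κ) :
    0 ≤ (Pᵀ * P) k k := by
  simp only [mul_apply, transpose_apply]
  exact sum_nonneg fun i _ => mul_self_nonneg _

-- `Pᵀ * P` is a symmetric idempotent, so its diagonal entry `G k k = ∑ j, G k j ^ 2 ≥ G k k ^ 2`.
theorem diag_transpose_mul_self_le_one [Fintype ι] [Fintype κ] [DecidableEq ι]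
    {P : Matrix ι κ ℝ} (hP : P * Pᵀ = 1) (k : κ) :
    (Pᵀ * P) k k ≤ 1 := by
  set G := Pᵀ * P
  have hidem : G * G = G := by
    simp only [G, Matrix.mul_assoc, ← Matrix.mul_assoc P, hP, Matrix.one_mul]
  have hsym : Gᵀ = G := by simp only [G, transpose_mul, transpose_transpose]
  have hsq : G k k = ∑ j, G k j ^ 2 := by
    conv_lhs => rw [← hidem, mul_apply]
    refine sum_congr rfl fun j _ => ?_
    rw [sq, ← transpose_apply G k j, hsym]
  have hle : G k k ^ 2 ≤ ∑ j, G k j ^ 2 :=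
    single_le_sum (fun j _ => sq_nonneg (G k j)) (mem_univ k)
  nlinarith [diag_transpose_mul_self_nonneg P k]

theorem sum_diag_transpose_mul_self_comp_le [Fintype ι] [Fintype κ] [DecidableEq ι]
    {ν : Type*} [Fintype ν] {P : Matrix ι κ ℝ} (hP : P * Pᵀ = 1) (e : ν ↪ κ) :
    ∑ l, (Pᵀ * P) (e l) (e l) ≤ Fintype.card ι := by
  calc ∑ l, (Pᵀ * P) (e l) (e l) = ∑ k ∈ univ.map e, (Pᵀ * P) k k :=
      (sum_map univ e fun k => (Pᵀ * P) k k).symm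
    _ ≤ (Pᵀ * P).trace := sum_le_univ_sum_of_nonneg (diag_transpose_mul_self_nonneg P)
    _ = Fintype.card ι := by rw [trace_mul_comm, hP, trace_one]

theorem mul_mul_transpose_self_eq_one [Fintype κ] [Fintype μ] [DecidableEq ι] [DecidableEq κ]
    {A : Matrix ι κ ℝ} {U : Matrix κ μ ℝ}
    (hA : A * Aᵀ = 1) (hU : U * Uᵀ = 1) : A * U * (A * U)ᵀ = 1 := by
  rw [transpose_mul, Matrix.mul_assoc, ← Matrix.mul_assoc U, hU, Matrix.one_mul, hA]

end Matrix

theorem trace_sigMat_mul {m n : ℕ} (σ : Fin (min m n) → ℝ) (M : Matrix (Fin n) (Fin m) ℝ) :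
    (sigMat σ * M).trace =
      ∑ l, σ l * M (Fin.castLE (min_le_right m n) l) (Fin.castLE (min_le_left m n) l) := by
  simp only [Matrix.trace, Matrix.diag, mul_apply]
  rw [← Fintype.sum_prod_type' (fun k j => sigMat σ k j * M j k)]
  symm
  refine Fintype.sum_of_injective (fun l => (Fin.castLE (min_le_left m n) l,
    Fin.castLE (min_le_right m n) l)) ?_ _ _ ?_ fun l => ?_
  · intro l l' h
    exact Fin.castLE_injective (min_le_left m n) (Prod.ext_iff.mp h).1
  · rintro ⟨k, j⟩ hkj
    rw [sigMat, dif_neg, zero_mul]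
    rintro ⟨hkj', hk⟩
    exact hkj ⟨⟨k, hk⟩, Prod.ext rfl (Fin.ext hkj')⟩
  · dsimp only
    rw [sigMat, dif_pos ⟨rfl, l.isLt⟩]
    rfl

theorem sum_mul_diag_transpose_mul_self_le {N k r : ℕ} (hr : r ≤ N) (hN : N ≤ k)
    {σ : Fin N → ℝ} (hσ0 : ∀ i, 0 ≤ σ i) (hσ : Antitone σ)
    {P : Matrix (Fin r) (Fin k) ℝ} (hP : P * Pᵀ = 1) :
    ∑ l, σ l * (Pᵀ * P) (Fin.castLE hN l) (Fin.castLE hN l) ≤ ∑ i : Fin r, σ (Fin.castLE hr i) :=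
  sum_mul_le_sum_castLE_of_antitone hr hσ0 hσ
    (fun l => diag_transpose_mul_self_nonneg P _) (fun l => diag_transpose_mul_self_le_one hP _)
    (by simpa using sum_diag_transpose_mul_self_comp_le hP (Fin.castLEEmb hN))

theorem trace_le_sum_largest_singular_values_general {m n r : ℕ} (hr : r ≤ min m n)
    (X : Matrix (Fin m) (Fin n) ℝ)
    (U : Matrix (Fin m) (Fin m) ℝ) (V : Matrix (Fin n) (Fin n) ℝ)
    (σ : Fin (min m n) → ℝ)
    (hU : U * Uᵀ = 1)
    (hV : V * Vᵀ = 1)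
    (hσ0 : ∀ i, 0 ≤ σ i) (hσd : ∀ i j, i ≤ j → σ j ≤ σ i)
    (hX : X = U * sigMat σ * Vᵀ)
    (A : Matrix (Fin r) (Fin m) ℝ) (B : Matrix (Fin r) (Fin n) ℝ)
    (hA : A * Aᵀ = 1) (hB : B * Bᵀ = 1) :
    (A * X * Bᵀ).trace ≤ ∑ i : Fin r, σ (Fin.castLE hr i) := by
  set P := A * U
  set Q := B * V
  set e₁ := Fin.castLE (min_le_left m n)
  set e₂ := Fin.castLE (min_le_right m n)
  have hAXB : A * X * Bᵀ = P * (sigMat σ * Qᵀ) := by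
    rw [hX, transpose_mul]
    simp only [P, Matrix.mul_assoc]
  calc (A * X * Bᵀ).trace = ∑ l, σ l * (Qᵀ * P) (e₂ l) (e₁ l) := by
        rw [hAXB, trace_mul_comm, Matrix.mul_assoc, trace_sigMat_mul]
    _ ≤ ∑ l, σ l * (((Qᵀ * Q) (e₂ l) (e₂ l) + (Pᵀ * P) (e₁ l) (e₁ l)) / 2) :=
        sum_le_sum fun l _ =>
          mul_le_mul_of_nonneg_left (transpose_mul_apply_le_diag P Q _ _) (hσ0 l)
    _ = (∑ l, σ l * (Qᵀ * Q) (e₂ l) (e₂ l) + ∑ l, σ l * (Pᵀ * P) (e₁ l) (e₁ l)) / 2 := by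
        rw [← sum_add_distrib, sum_div]
        exact sum_congr rfl fun l _ => by ring
    _ ≤ (∑ i : Fin r, σ (Fin.castLE hr i) + ∑ i : Fin r, σ (Fin.castLE hr i)) / 2 := by
        gcongr
        · exact sum_mul_diag_transpose_mul_self_le hr _ hσ0 hσd
            (mul_mul_transpose_self_eq_one hB hV)
        · exact sum_mul_diag_transpose_mul_self_le hr _ hσ0 hσd
            (mul_mul_transpose_self_eq_one hA hU)
    _ = ∑ i : Fin r, σ (Fin.castLE hr i) := by ring

/-- Von Neumann trace inequality for partial isometries: if AAᵀ = I and BBᵀ = I,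
then tr(AXBᵀ) ≤ Σ_{j=1}^r σ_j(X), the sum of the r largest singular values. -/
theorem trace_le_sum_largest_singular_values {m n r : ℕ} (hr : r ≤ min m n)
    (X : Matrix (Fin m) (Fin n) ℝ)
    (U : Matrix (Fin m) (Fin m) ℝ) (V : Matrix (Fin n) (Fin n) ℝ)
    (σ : Fin (min m n) → ℝ)
    (hU : U * Uᵀ = 1) (hU' : Uᵀ * U = 1)
    (hV : V * Vᵀ = 1) (hV' : Vᵀ * V = 1)
    (hσ0 : ∀ i, 0 ≤ σ i) (hσd : ∀ i j, i ≤ j → σ j ≤ σ i)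
    (hX : X = U * sigMat σ * Vᵀ)
    (A : Matrix (Fin r) (Fin m) ℝ) (B : Matrix (Fin r) (Fin n) ℝ)
    (hA : A * Aᵀ = 1) (hB : B * Bᵀ = 1) :
    (A * X * Bᵀ).trace ≤ ∑ i : Fin r, σ (Fin.castLE hr i) :=
  trace_le_sum_largest_singular_values_general hr X U V σ hU hV hσ0 hσd hX A B hA hB
end
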